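/- Let μ be a σ-finite measure on 𝒳 and let q, q', r be probability densities with respect to μ, with associated probability measures Q = q·μ, Q' = q'·μ, R = r·μ. With ψ₁(x) = (x−1)/(x+1) extended by ψ₁(+∞) = 1 and the conventions 0/0 = 1 and a/0 = +∞ for a > 0, one has ∫ ψ₁(√(q'(x)/q(x))) dR(x) ≤ 4·h²(R,Q) − (3/8)·h²(R,Q'), where h² denotes squared Hellinger distance. -/

import Mathlib

/-!
Writing `a = √q`, `b = √q'` and `c = √r` pointwise, `ψ₁(√(q'/q)) = (b - a)/(b + a)`, and for
`a, b, c ≥ 0` the elementary inequality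
`c² (b - a)/(b + a) ≤ 2 (c - a)² - (3/16) (c - b)² + (1/4) (b² - a²)`
holds. Integrating it against `μ`, the last term integrates to `(1/4)(1 - 1) = 0`, and the first
two give `4 h²(R,Q) - (3/8) h²(R,Q')`.
-/

open MeasureTheory ENNReal

open Classical in
/-- The ratio `q'/q` in `[0,+∞]`, with the conventions `0/0 = 1` and `a/0 = +∞` for
`a > 0` (the latter being automatic in `ℝ≥0∞`). -/
noncomputable def densityRatio {𝒳 : Type*} (q q' : 𝒳 → ℝ≥0∞) (x : 𝒳) : ℝ≥0∞ :=
  if q x = 0 ∧ q' x = 0 then 1 else q' x / q x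

/-- `ψ₁(√z)` for `z ∈ [0,+∞]`, where `ψ₁(x) = (x−1)/(x+1)` and `ψ₁(+∞) = 1`. -/
noncomputable def psi1OfSqrt (z : ℝ≥0∞) : ℝ :=
  if z = ⊤ then 1 else (Real.sqrt z.toReal - 1) / (Real.sqrt z.toReal + 1)

/-- Squared Hellinger distance `(1/2)∫(√a − √b)² dμ` between the probabilities of
densities `a` and `b` with respect to `μ`. -/
noncomputable def hellingerSqDens {𝒳 : Type*} [MeasurableSpace 𝒳] (μ : Measure 𝒳)
    (a b : 𝒳 → ℝ≥0∞) : ℝ :=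
  (1/2) * ∫ x, (Real.sqrt (a x).toReal - Real.sqrt (b x).toReal) ^ 2 ∂μ

lemma sq_mul_sub_div_add_le {a b c : ℝ} (ha : 0 ≤ a) (hb : 0 ≤ b) (hc : 0 ≤ c) :
    c ^ 2 * ((b - a) / (b + a)) ≤
      2 * (c - a) ^ 2 - 3 / 16 * (c - b) ^ 2 + 1 / 4 * (b ^ 2 - a ^ 2) := by
  rcases (add_nonneg hb ha).eq_or_lt with hab | hab
  · obtain ⟨rfl, rfl⟩ : a = 0 ∧ b = 0 := ⟨by linarith, by linarith⟩
    nlinarith [sq_nonneg c]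
  · rw [← mul_div_assoc, div_le_iff₀ hab]
    -- the cleared inequality is a nonnegative combination of `a (…)²`, `b (…)²` and `c (a - b)²`
    nlinarith [mul_nonneg ha (sq_nonneg (28 * (a - c) + 5 * (b - c))),
      mul_nonneg ha (sq_nonneg (b - c)), mul_nonneg hb (sq_nonneg (6 * (a - c) - (b - c))),
      mul_nonneg hb (sq_nonneg (b - c)), mul_nonneg hc (sq_nonneg (a - b))]

lemma abs_psi1OfSqrt_le_one (z : ℝ≥0∞) : |psi1OfSqrt z| ≤ 1 := by
  unfold psi1OfSqrt
  split_ifs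
  · simp
  · have h0 : 0 ≤ √z.toReal := Real.sqrt_nonneg _
    rw [abs_div, abs_of_pos (by linarith : 0 < √z.toReal + 1), div_le_one (by linarith), abs_le]
    constructor <;> linarith

lemma measurable_psi1OfSqrt : Measurable psi1OfSqrt := by
  have h : Measurable fun z : ℝ≥0∞ => √z.toReal := ENNReal.measurable_toReal.sqrt
  exact Measurable.ite (measurableSet_singleton ⊤) measurable_const
    ((h.sub measurable_const).div (h.add measurable_const))

lemma measurable_densityRatio {𝒳 : Type*} [MeasurableSpace 𝒳] {q q' : 𝒳 → ℝ≥0∞}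
    (hq : Measurable q) (hq' : Measurable q') : Measurable (densityRatio q q') :=
  Measurable.ite ((measurableSet_eq_fun hq measurable_const).inter
    (measurableSet_eq_fun hq' measurable_const)) measurable_const (hq'.div hq)

/-- When `q x = q' x = 0` both sides vanish, the right side through Lean's `0 / 0 = 0`. -/
lemma psi1OfSqrt_densityRatio {𝒳 : Type*} {q q' : 𝒳 → ℝ≥0∞} {x : 𝒳} (hq : q x ≠ ∞)
    (hq' : q' x ≠ ∞) :
    psi1OfSqrt (densityRatio q q' x) =
      (√(q' x).toReal - √(q x).toReal) / (√(q' x).toReal + √(q x).toReal) := by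
  by_cases h0 : q x = 0 ∧ q' x = 0
  · simp [densityRatio, psi1OfSqrt, h0]
  rw [densityRatio, if_neg h0]
  by_cases hq0 : q x = 0
  · have hq'0 : q' x ≠ 0 := fun h => h0 ⟨hq0, h⟩
    have hb : 0 < √(q' x).toReal := Real.sqrt_pos.2 (ENNReal.toReal_pos hq'0 hq')
    simp [psi1OfSqrt, hq0, ENNReal.div_zero hq'0, hb.ne']
  · have ha : 0 < √(q x).toReal := Real.sqrt_pos.2 (ENNReal.toReal_pos hq0 hq)
    have hne : q' x / q x ≠ ∞ := ENNReal.div_ne_top hq' hq0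
    rw [psi1OfSqrt, if_neg hne, ENNReal.toReal_div, Real.sqrt_div' _ ENNReal.toReal_nonneg,
      div_sub_one ha.ne', div_add_one ha.ne', div_div_div_cancel_right₀ ha.ne']

lemma mul_psi1OfSqrt_densityRatio_le {𝒳 : Type*} {q q' : 𝒳 → ℝ≥0∞} {x : 𝒳}
    (hq : q x ≠ ∞) (hq' : q' x ≠ ∞) {c : ℝ} (hc : 0 ≤ c) :
    c * psi1OfSqrt (densityRatio q q' x) ≤
      2 * (√c - √(q x).toReal) ^ 2 - 3 / 16 * (√c - √(q' x).toReal) ^ 2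
        + 1 / 4 * ((q' x).toReal - (q x).toReal) := by
  have h := sq_mul_sub_div_add_le (Real.sqrt_nonneg (q x).toReal)
    (Real.sqrt_nonneg (q' x).toReal) (Real.sqrt_nonneg c)
  rwa [Real.sq_sqrt hc, Real.sq_sqrt ENNReal.toReal_nonneg, Real.sq_sqrt ENNReal.toReal_nonneg,
    ← psi1OfSqrt_densityRatio hq hq'] at h

lemma integrable_sq_sqrt_sub_sqrt {𝒳 : Type*} [MeasurableSpace 𝒳] {μ : Measure 𝒳}
    {f g : 𝒳 → ℝ} (hf : Integrable f μ) (hg : Integrable g μ) :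
    Integrable (fun x => (√(f x) - √(g x)) ^ 2) μ := by
  refine ((hf.abs.add hg.abs).const_mul 2).mono'
    (((Real.continuous_sqrt.comp_aestronglyMeasurable hf.1).sub
      (Real.continuous_sqrt.comp_aestronglyMeasurable hg.1)).pow 2) (ae_of_all _ fun x => ?_)
  have hf' : √(f x) ^ 2 ≤ |f x| := by
    rw [Real.sq_sqrt']; exact max_le (le_abs_self _) (abs_nonneg _)
  have hg' : √(g x) ^ 2 ≤ |g x| := by
    rw [Real.sq_sqrt']; exact max_le (le_abs_self _) (abs_nonneg _)
  rw [Real.norm_eq_abs, abs_of_nonneg (sq_nonneg _)]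
  show _ ≤ 2 * (|f x| + |g x|)
  nlinarith [sq_nonneg (√(f x) + √(g x))]

lemma integral_toReal_mul_psi1OfSqrt_le {𝒳 : Type*} [MeasurableSpace 𝒳] {μ : Measure 𝒳}
    {q q' r : 𝒳 → ℝ≥0∞} (hq : Measurable q) (hq' : Measurable q') (hr : Measurable r)
    (hq_ne : ∫⁻ x, q x ∂μ ≠ ∞) (hq'_ne : ∫⁻ x, q' x ∂μ ≠ ∞) (hr_ne : ∫⁻ x, r x ∂μ ≠ ∞) :
    ∫ x, (r x).toReal * psi1OfSqrt (densityRatio q q' x) ∂μ ≤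
      4 * hellingerSqDens μ r q - (3/8) * hellingerSqDens μ r q'
        + 1 / 4 * ((∫ x, (q' x).toReal ∂μ) - ∫ x, (q x).toReal ∂μ) := by
  have iq := integrable_toReal_of_lintegral_ne_top hq.aemeasurable hq_ne
  have iq' := integrable_toReal_of_lintegral_ne_top hq'.aemeasurable hq'_ne
  have ir := integrable_toReal_of_lintegral_ne_top hr.aemeasurable hr_ne
  have iH : Integrable (fun x => 2 * (√(r x).toReal - √(q x).toReal) ^ 2) μ :=
    (integrable_sq_sqrt_sub_sqrt ir iq).const_mul 2
  have iH' : Integrable (fun x => 3 / 16 * (√(r x).toReal - √(q' x).toReal) ^ 2) μ :=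
    (integrable_sq_sqrt_sub_sqrt ir iq').const_mul _
  have iHH' : Integrable (fun x => 2 * (√(r x).toReal - √(q x).toReal) ^ 2
      - 3 / 16 * (√(r x).toReal - √(q' x).toReal) ^ 2) μ := iH.sub iH'
  have iq'q : Integrable (fun x => 1 / 4 * ((q' x).toReal - (q x).toReal)) μ :=
    (iq'.sub iq).const_mul _
  have ileft : Integrable (fun x => (r x).toReal * psi1OfSqrt (densityRatio q q' x)) μ :=
    ir.mul_bdd (measurable_psi1OfSqrt.comp (measurable_densityRatio hq hq')).aestronglyMeasurable
      (ae_of_all _ fun x => abs_psi1OfSqrt_le_one _)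
  calc ∫ x, (r x).toReal * psi1OfSqrt (densityRatio q q' x) ∂μ
      ≤ ∫ x, (2 * (√(r x).toReal - √(q x).toReal) ^ 2
          - 3 / 16 * (√(r x).toReal - √(q' x).toReal) ^ 2
          + 1 / 4 * ((q' x).toReal - (q x).toReal)) ∂μ := by
        refine integral_mono_ae ileft (iHH'.add iq'q) ?_
        filter_upwards [ae_lt_top hq hq_ne, ae_lt_top hq' hq'_ne] with x hqx hq'x
        exact mul_psi1OfSqrt_densityRatio_le hqx.ne hq'x.ne ENNReal.toReal_nonneg
    _ = _ := by
        rw [integral_add iHH' iq'q, integral_sub iH iH', integral_const_mul, integral_const_mul,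
          integral_const_mul, integral_sub iq' iq, hellingerSqDens, hellingerSqDens]
        ring

theorem psi1_expectation_le_hellinger_combination_general
    {𝒳 : Type*} [MeasurableSpace 𝒳] (μ : Measure 𝒳)
    (q q' r : 𝒳 → ℝ≥0∞) (hq : Measurable q) (hq' : Measurable q') (hr : Measurable r)
    (hq1 : ∫⁻ x, q x ∂μ = 1) (hq'1 : ∫⁻ x, q' x ∂μ = 1) (hr1 : ∫⁻ x, r x ∂μ = 1) :
    ∫ x, psi1OfSqrt (densityRatio q q' x) ∂(μ.withDensity r) ≤
      4 * hellingerSqDens μ r q - (3/8) * hellingerSqDens μ r q' := by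
  have hq_ne : ∫⁻ x, q x ∂μ ≠ ∞ := by simp [hq1]
  have hq'_ne : ∫⁻ x, q' x ∂μ ≠ ∞ := by simp [hq'1]
  have hr_ne : ∫⁻ x, r x ∂μ ≠ ∞ := by simp [hr1]
  have hq_int : ∫ x, (q x).toReal ∂μ = 1 := by
    rw [integral_toReal hq.aemeasurable (ae_lt_top hq hq_ne), hq1, toReal_one]
  have hq'_int : ∫ x, (q' x).toReal ∂μ = 1 := by
    rw [integral_toReal hq'.aemeasurable (ae_lt_top hq' hq'_ne), hq'1, toReal_one]
  rw [integral_withDensity_eq_integral_toReal_smul hr (ae_lt_top hr hr_ne)]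
  simpa [hq_int, hq'_int] using integral_toReal_mul_psi1OfSqrt_le hq hq' hr hq_ne hq'_ne hr_ne

/-- For probability densities `q, q', r` w.r.t. a σ-finite measure `μ`, with
`R = r·μ`, `Q = q·μ`, `Q' = q'·μ`, one has
`∫ ψ₁(√(q'/q)) dR ≤ 4·h²(R,Q) − (3/8)·h²(R,Q')`. -/
theorem psi1_expectation_le_hellinger_combination
    {𝒳 : Type*} [MeasurableSpace 𝒳] (μ : Measure 𝒳) [SigmaFinite μ]
    (q q' r : 𝒳 → ℝ≥0∞) (hq : Measurable q) (hq' : Measurable q') (hr : Measurable r)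
    (hq1 : ∫⁻ x, q x ∂μ = 1) (hq'1 : ∫⁻ x, q' x ∂μ = 1) (hr1 : ∫⁻ x, r x ∂μ = 1) :
    ∫ x, psi1OfSqrt (densityRatio q q' x) ∂(μ.withDensity r) ≤
      4 * hellingerSqDens μ r q - (3/8) * hellingerSqDens μ r q' :=
  psi1_expectation_le_hellinger_combination_general μ q q' r hq hq' hr hq1 hq'1 hr1
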